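/- arXiv:2104.02358 — 2 statements merged into one kernel-verified Lean document; each statement's English description precedes it below -/
import Mathlib

section
/- There exist a positive-integer-valued function q : ℕ → ℕ and a positive integer B such that: (i) the function n ↦ q(⌊log n⌋ + 1) is a super-polynomial (log denoting the natural logarithm), and (ii) for every positive integer n, the opposite-Ramsey number satisfies r((2n+1)², q(n)) ≤ B; that is, there exists a coloring of the 2-element subsets of a q(n)-element set with (2n+1)² colors admitting no set of B+1 vertices all of whose 2-element subsets receive the same color. In particular limsup_{n→∞} r((2n+1)², q(n)) < ∞. -/
open Filter

/-- A function `f : ℕ → ℝ` is a super-polynomial if for every (nonzero) polynomial `g`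
with real coefficients, `liminf_{n→∞} |f n| / |g n| = ∞`, i.e. the quotient tends to
infinity. -/
def SuperPolynomial (f : ℕ → ℝ) : Prop :=
  ∀ g : Polynomial ℝ, g ≠ 0 →
    Tendsto (fun n : ℕ => |f n| / |g.eval (n : ℝ)|) atTop atTop

/-- A finite set of vertices is monochromatic for an edge-coloring `C` of the
2-element subsets if all its 2-element subsets receive the same color. -/
def IsMonochromatic {V C : Type*} (Col : Sym2 V → C) (s : Finset V) : Prop :=
  ∃ c : C, ∀ x ∈ s, ∀ y ∈ s, x ≠ y → Col s(x, y) = c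

/-!
Colour a pair `{x, y}` of `t`-bit numbers by the most significant bit in which `x` and `y`
differ. If three numbers pairwise differ first at the same bit `c`, their `c`-th bits are
three pairwise distinct booleans, which is impossible; so `2 ^ t` vertices carry a
`t`-colouring without monochromatic triangles. With `t = (2n + 1)²` this gives
`q n = 2 ^ ((2n + 1)²)` and `B = 2`, and since `n ≤ 4 ^ (⌊log n⌋ + 1)`, the sequence
`q (⌊log n⌋ + 1)` eventually dominates every `n ^ k`.
-/

namespace Nat

def highestDifferingBit (x y : ℕ) : ℕ := (x ^^^ y).log2

theorem highestDifferingBit_comm (x y : ℕ) :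
    highestDifferingBit x y = highestDifferingBit y x := by
  rw [highestDifferingBit, highestDifferingBit, Nat.xor_comm]

theorem testBit_highestDifferingBit_ne {x y : ℕ} (h : x ≠ y) :
    x.testBit (highestDifferingBit x y) ≠ y.testBit (highestDifferingBit x y) := by
  have hxor : x ^^^ y ≠ 0 := fun h0 => h (by simpa using h0)
  have hbit := Nat.testBit_log2 hxor
  rw [Nat.testBit_xor] at hbit
  simpa [highestDifferingBit] using hbit

theorem highestDifferingBit_lt {t x y : ℕ} (ht : 0 < t) (hx : x < 2 ^ t) (hy : y < 2 ^ t) :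
    highestDifferingBit x y < t := by
  rcases eq_or_ne (x ^^^ y) 0 with h0 | h0
  · simpa [highestDifferingBit, h0] using ht
  · exact (Nat.log2_lt h0).mpr (Nat.xor_lt_two_pow hx hy)

end Nat

def highestDifferingBitColoring (t : ℕ) (ht : 0 < t) : Sym2 (Fin (2 ^ t)) → Fin t :=
  Sym2.lift ⟨fun x y => ⟨Nat.highestDifferingBit x y, Nat.highestDifferingBit_lt ht x.2 y.2⟩,
    fun x y => Fin.ext (Nat.highestDifferingBit_comm x y)⟩

theorem card_le_two_of_isMonochromatic_highestDifferingBitColoring {t : ℕ} {ht : 0 < t}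
    {s : Finset (Fin (2 ^ t))} (hs : IsMonochromatic (highestDifferingBitColoring t ht) s) :
    s.card ≤ 2 := by
  obtain ⟨c, hc⟩ := hs
  have hinj : Set.InjOn (fun x : Fin (2 ^ t) => (x : ℕ).testBit c) s := by
    intro x hx y hy hxy
    by_contra hne
    have hcol : Nat.highestDifferingBit x y = c := congrArg Fin.val (hc x hx y hy hne)
    exact Nat.testBit_highestDifferingBit_ne (Fin.val_injective.ne hne) (hcol ▸ hxy)
  simpa using Finset.card_le_card_of_injOn (t := Finset.univ) _
    (fun _ _ => Finset.mem_coe.2 (Finset.mem_univ _)) hinj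

theorem superPolynomial_of_eventually_pow_le {f : ℕ → ℝ}
    (hf : ∀ k : ℕ, ∀ᶠ n : ℕ in atTop, (n : ℝ) ^ k ≤ |f n|) : SuperPolynomial f := by
  intro g hg
  have hdeg : g.degree < (Polynomial.X ^ (g.natDegree + 1) : Polynomial ℝ).degree := by
    rw [Polynomial.degree_X_pow]
    exact Polynomial.degree_le_natDegree.trans_lt (by exact_mod_cast g.natDegree.lt_succ_self)
  have hpow := (Polynomial.abs_div_tendsto_atTop_atTop_of_degree_gt _ _ hdeg hg).comp
    tendsto_natCast_atTop_atTop
  refine tendsto_atTop_mono' atTop ?_ hpow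
  filter_upwards [hf (g.natDegree + 1)] with n hn
  simp only [Function.comp_apply, Polynomial.eval_pow, Polynomial.eval_X, abs_div, abs_pow,
    Nat.abs_cast]
  gcongr

theorem natCast_le_four_pow_floor_log_add_one (n : ℕ) : n ≤ 4 ^ (⌊Real.log n⌋₊ + 1) := by
  rcases Nat.eq_zero_or_pos n with rfl | hn
  · positivity
  have hn' : (0 : ℝ) < n := by exact_mod_cast hn
  suffices (n : ℝ) ≤ 4 ^ (⌊Real.log n⌋₊ + 1) by exact_mod_cast this
  calc (n : ℝ) = Real.exp (Real.log n) := (Real.exp_log hn').symm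
    _ ≤ Real.exp ((⌊Real.log n⌋₊ + 1 : ℕ) * 1) := by
        gcongr
        push_cast
        linarith [Nat.lt_floor_add_one (Real.log n)]
    _ = Real.exp 1 ^ (⌊Real.log n⌋₊ + 1) := Real.exp_nat_mul _ _
    _ ≤ 4 ^ (⌊Real.log n⌋₊ + 1) := by
        gcongr
        linarith [Real.exp_one_lt_three]

theorem pow_le_two_pow_sq_of_le_four_pow {n m k : ℕ} (hn : n ≤ 4 ^ m) (hk : k ≤ m) :
    n ^ k ≤ 2 ^ ((2 * m + 1) ^ 2) :=
  calc n ^ k ≤ (4 ^ m) ^ k := Nat.pow_le_pow_left hn k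
    _ = 2 ^ (2 * m * k) := by
        rw [← pow_mul, show (4 : ℕ) = 2 ^ 2 by rfl, ← pow_mul, mul_assoc]
    _ ≤ 2 ^ ((2 * m + 1) ^ 2) := Nat.pow_le_pow_right two_pos (by nlinarith)

/-- There exist a positive-integer-valued function `q : ℕ → ℕ` and a positive integer `B`
such that `n ↦ q(⌊log n⌋ + 1)` is a super-polynomial (natural logarithm), and for every
positive integer `n` the opposite-Ramsey number satisfies `r((2n+1)², q(n)) ≤ B`: there is
a coloring of the 2-element subsets of a `q(n)`-element set with `(2n+1)²` colors
admitting no monochromatic set of `B+1` vertices.  In particular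
`limsup_{n→∞} r((2n+1)², q(n)) < ∞`. -/
theorem exists_superPolynomial_with_bounded_opposite_ramsey :
    ∃ (q : ℕ → ℕ) (B : ℕ), (∀ n : ℕ, 0 < q n) ∧ 0 < B ∧
      SuperPolynomial (fun n : ℕ => (q (⌊Real.log (n : ℝ)⌋₊ + 1) : ℝ)) ∧
      ∀ n : ℕ, 0 < n →
        ∃ Col : Sym2 (Fin (q n)) → Fin ((2 * n + 1) ^ 2),
          ∀ s : Finset (Fin (q n)), IsMonochromatic Col s → s.card ≤ B := by
  refine ⟨fun n => 2 ^ ((2 * n + 1) ^ 2), 2, fun n => by positivity, two_pos, ?_,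
    fun n _ => ⟨highestDifferingBitColoring _ (by positivity),
      fun _ => card_le_two_of_isMonochromatic_highestDifferingBitColoring⟩⟩
  refine superPolynomial_of_eventually_pow_le fun k => ?_
  have hlog : Tendsto (fun n : ℕ => ⌊Real.log n⌋₊) atTop atTop :=
    tendsto_nat_floor_atTop.comp (Real.tendsto_log_atTop.comp tendsto_natCast_atTop_atTop)
  filter_upwards [hlog.eventually_ge_atTop k] with n hk
  rw [Nat.abs_cast]
  exact_mod_cast pow_le_two_pow_sq_of_le_four_pow (natCast_le_four_pow_floor_log_add_one n)
    (by omega)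
end

section
/- Let (X,D) be a compact metric space, let α > 1, and let T be an additive action of ℤ² on X such that for every positive integer n and all distinct x, y ∈ X with D(x,y) ≥ α^{-n} there exists v ∈ ℤ² with |v| ≤ n and D(T^v x, T^v y) ≥ 1/(4α). Then for every positive integer n and every α^{-n}-separated subset V of X, there is a coloring of the 2-element subsets of V by the color set {v ∈ ℤ² : |v| ≤ n} (which has (2n+1)² elements) such that every subset of V all of whose 2-element subsets receive the same color has cardinality at most S(1/(4α)). Consequently, the opposite-Ramsey numbers r((2n+1)², S(α^{-n})) are bounded above by S(1/(4α)) uniformly in n. -/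
/-- Let `(X, D)` be a compact metric space, `α > 1`, and `T` an additive action of `ℤ²`
on `X` such that for every positive `n` and all distinct `x, y` with `D(x,y) ≥ α^{-n}`
there is `v ∈ ℤ²` with `|v| ≤ n` and `D(T^v x, T^v y) ≥ 1/(4α)`.  Then for every
positive `n` and every `α^{-n}`-separated subset `V` of `X` there is a coloring of the
2-element subsets of `V` by the color set `{v ∈ ℤ² : |v| ≤ n}` whose monochromatic
subsets all have cardinality at most `S(1/(4α))`; consequently the opposite-Ramsey
numbers `r((2n+1)², S(α^{-n}))` are bounded above by `S(1/(4α))` uniformly in `n`. -/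
theorem coloring_from_expansive_action
    {X : Type*} [MetricSpace X] [CompactSpace X]
    (α : ℝ) (hα : 1 < α)
    (T : ℤ × ℤ → X → X)
    (hT0 : T 0 = id)
    (hTadd : ∀ v w : ℤ × ℤ, T (v + w) = T v ∘ T w)
    (S : ℝ → ℕ)
    (hS : ∀ ε : ℝ, 0 < ε → IsGreatest
      {m : ℕ | ∃ s : Finset X, (∀ x ∈ s, ∀ y ∈ s, x ≠ y → ε ≤ dist x y) ∧ s.card = m}
      (S ε))
    (hexp : ∀ n : ℕ, 0 < n → ∀ x y : X, x ≠ y → α ^ (-(n : ℤ)) ≤ dist x y →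
      ∃ v : ℤ × ℤ, max |v.1| |v.2| ≤ (n : ℤ) ∧
        1 / (4 * α) ≤ dist (T v x) (T v y)) :
    (∀ n : ℕ, 0 < n → ∀ V : Finset X,
      (∀ x ∈ V, ∀ y ∈ V, x ≠ y → α ^ (-(n : ℤ)) ≤ dist x y) →
      ∃ Col : X → X → ℤ × ℤ,
        (∀ x y : X, Col x y = Col y x) ∧
        (∀ x ∈ V, ∀ y ∈ V, x ≠ y →
          max |(Col x y).1| |(Col x y).2| ≤ (n : ℤ)) ∧
        ∀ s : Finset X, s ⊆ V → (∃ c : ℤ × ℤ, ∀ x ∈ s, ∀ y ∈ s, x ≠ y → Col x y = c) →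
          s.card ≤ S (1 / (4 * α))) ∧
    (∀ n : ℕ, 0 < n →
      ∃ Col : Sym2 (Fin (S (α ^ (-(n : ℤ))))) → Fin ((2 * n + 1) ^ 2),
        ∀ s : Finset (Fin (S (α ^ (-(n : ℤ))))),
          IsMonochromatic Col s → s.card ≤ S (1 / (4 * α))) := by
  classical
  have hαpos : (0:ℝ) < α := lt_trans one_pos hα
  have hcpos : (0:ℝ) < 1 / (4 * α) := by positivity
  have part1 : ∀ n : ℕ, 0 < n → ∀ V : Finset X,
      (∀ x ∈ V, ∀ y ∈ V, x ≠ y → α ^ (-(n : ℤ)) ≤ dist x y) →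
      ∃ Col : X → X → ℤ × ℤ,
        (∀ x y : X, Col x y = Col y x) ∧
        (∀ x ∈ V, ∀ y ∈ V, x ≠ y →
          max |(Col x y).1| |(Col x y).2| ≤ (n : ℤ)) ∧
        ∀ s : Finset X, s ⊆ V → (∃ c : ℤ × ℤ, ∀ x ∈ s, ∀ y ∈ s, x ≠ y → Col x y = c) →
          s.card ≤ S (1 / (4 * α)) := by
    intro n hn V hV
    set P : Sym2 X → ℤ × ℤ → Prop := fun p v =>
      max |v.1| |v.2| ≤ (n:ℤ) ∧ ∀ x y : X, p = s(x, y) → 1 / (4 * α) ≤ dist (T v x) (T v y)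
      with hP
    set g : Sym2 X → ℤ × ℤ := fun p => if h : ∃ v, P p v then h.choose else 0 with hg
    have hPex : ∀ x ∈ V, ∀ y ∈ V, x ≠ y → ∃ v, P s(x, y) v := by
      intro x hx y hy hxy
      obtain ⟨v, hv1, hv2⟩ := hexp n hn x y hxy (hV x hx y hy hxy)
      refine ⟨v, hv1, ?_⟩
      intro a b hab
      rw [Sym2.eq_iff] at hab
      rcases hab with ⟨rfl, rfl⟩ | ⟨rfl, rfl⟩
      · exact hv2
      · rwa [dist_comm]
    have hgP : ∀ x ∈ V, ∀ y ∈ V, x ≠ y → P s(x, y) (g s(x, y)) := by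
      intro x hx y hy hxy
      have h := hPex x hx y hy hxy
      rw [hg]
      simp only [dif_pos h]
      exact h.choose_spec
    refine ⟨fun x y => g s(x, y), ?_, ?_, ?_⟩
    · intro x y; exact congrArg g (Sym2.eq_swap)
    · intro x hx y hy hxy
      exact (hgP x hx y hy hxy).1
    · rintro s hsV ⟨c, hcol⟩
      have hinj : Function.Injective (T c) := by
        have h1 : T (-c) ∘ T c = id := by
          rw [← hTadd, neg_add_cancel, hT0]
        intro a b hab
        have ha := congrFun h1 a
        have hb := congrFun h1 b
        simp only [Function.comp_apply, id_eq] at ha hb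
        rw [← ha, ← hb, hab]
      set t : Finset X := s.image (T c) with ht
      have hsep : ∀ u ∈ t, ∀ w ∈ t, u ≠ w → 1 / (4 * α) ≤ dist u w := by
        intro u hu w hw huw
        obtain ⟨x, hx, rfl⟩ := Finset.mem_image.1 hu
        obtain ⟨y, hy, rfl⟩ := Finset.mem_image.1 hw
        have hxy : x ≠ y := fun h => huw (by rw [h])
        have hPxy := (hgP x (hsV hx) y (hsV hy) hxy).2 x y rfl
        have hceq : g s(x, y) = c := hcol x hx y hy hxy
        rwa [hceq] at hPxy
      have hmem : t.card ∈ {m : ℕ | ∃ s : Finset X,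
          (∀ x ∈ s, ∀ y ∈ s, x ≠ y → 1 / (4 * α) ≤ dist x y) ∧ s.card = m} :=
        ⟨t, hsep, rfl⟩
      have hle := (hS _ hcpos).2 hmem
      rwa [ht, Finset.card_image_of_injective s hinj] at hle
  refine ⟨part1, ?_⟩
  intro n hn
  have hεq : (0:ℝ) < α ^ (-(n:ℤ)) := zpow_pos hαpos _
  obtain ⟨W, hWsep, hWcard⟩ := (hS _ hεq).1
  set q := S (α ^ (-(n:ℤ))) with hq
  have e : Fin q ≃ {x // x ∈ W} := (finCongr hWcard.symm).trans W.equivFin.symm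
  set f : Fin q → X := fun i => (e i : X) with hf
  have hfinj : Function.Injective f := fun i j h =>
    e.injective (Subtype.ext h)
  have hfW : ∀ i, f i ∈ W := fun i => (e i).2
  obtain ⟨Col, hsym, hbox, hmono⟩ := part1 n hn W hWsep
  set N := (2 * n + 1) ^ 2 with hN
  have hNpos : 0 < N := by positivity
  set enc : ℤ × ℤ → Fin N := fun v =>
    ⟨((v.2 + n).toNat + (v.1 + n).toNat * (2 * n + 1)) % N, Nat.mod_lt _ hNpos⟩ with henc
  have encinj : ∀ v w : ℤ × ℤ, max |v.1| |v.2| ≤ (n:ℤ) → max |w.1| |w.2| ≤ (n:ℤ) →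
      enc v = enc w → v = w := by
    intro v w hv hw hvw
    have hv1 : |v.1| ≤ (n:ℤ) := le_of_max_le_left hv
    have hv2 : |v.2| ≤ (n:ℤ) := le_of_max_le_right hv
    have hw1 : |w.1| ≤ (n:ℤ) := le_of_max_le_left hw
    have hw2 : |w.2| ≤ (n:ℤ) := le_of_max_le_right hw
    rw [abs_le] at hv1 hv2 hw1 hw2
    have bv1 : (v.1 + n).toNat ≤ 2 * n := by omega
    have bv2 : (v.2 + n).toNat ≤ 2 * n := by omega
    have bw1 : (w.1 + n).toNat ≤ 2 * n := by omega
    have bw2 : (w.2 + n).toNat ≤ 2 * n := by omega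
    have hltv : (v.2 + n).toNat + (v.1 + n).toNat * (2 * n + 1) < N := by
      rw [hN]; nlinarith
    have hltw : (w.2 + n).toNat + (w.1 + n).toNat * (2 * n + 1) < N := by
      rw [hN]; nlinarith
    have heq : (v.2 + n).toNat + (v.1 + n).toNat * (2 * n + 1)
        = (w.2 + n).toNat + (w.1 + n).toNat * (2 * n + 1) := by
      have := congrArg Fin.val hvw
      simpa [henc, Nat.mod_eq_of_lt hltv, Nat.mod_eq_of_lt hltw] using this
    have h2 : (v.2 + n).toNat = (w.2 + n).toNat := by
      have hm := congrArg (· % (2 * n + 1)) heq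
      simpa [Nat.add_mul_mod_self_right,
        Nat.mod_eq_of_lt (by omega : (v.2+n).toNat < 2*n+1),
        Nat.mod_eq_of_lt (by omega : (w.2+n).toNat < 2*n+1)] using hm
    have h1 : (v.1 + n).toNat = (w.1 + n).toNat := by
      rw [h2] at heq
      exact Nat.eq_of_mul_eq_mul_right (by omega) (Nat.add_left_cancel heq)
    have : v.1 = w.1 := by omega
    have : v.2 = w.2 := by omega
    exact Prod.ext ‹v.1 = w.1› ‹v.2 = w.2›
  refine ⟨Sym2.lift ⟨fun i j => enc (Col (f i) (f j)), fun i j => congrArg enc (hsym (f i) (f j))⟩, ?_⟩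
  rintro s ⟨cc, hcc⟩
  set t : Finset X := s.image f with htdef
  have htW : t ⊆ W := by
    intro x hx
    obtain ⟨i, _, rfl⟩ := Finset.mem_image.1 hx
    exact hfW i
  have hmonot : ∃ c : ℤ × ℤ, ∀ x ∈ t, ∀ y ∈ t, x ≠ y → Col x y = c := by
    by_cases hd : ∃ i ∈ s, ∃ j ∈ s, i ≠ j
    · obtain ⟨i0, hi0, j0, hj0, hij0⟩ := hd
      refine ⟨Col (f i0) (f j0), ?_⟩
      intro x hx y hy hxy
      obtain ⟨i, hi, rfl⟩ := Finset.mem_image.1 hx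
      obtain ⟨j, hj, rfl⟩ := Finset.mem_image.1 hy
      have hij : i ≠ j := fun h => hxy (by rw [h])
      have hc1 : enc (Col (f i) (f j)) = cc := by
        simpa [Sym2.lift_mk] using hcc i hi j hj hij
      have hc2 : enc (Col (f i0) (f j0)) = cc := by
        simpa [Sym2.lift_mk] using hcc i0 hi0 j0 hj0 hij0
      refine encinj _ _ ?_ ?_ (hc1.trans hc2.symm)
      · exact hbox _ (hfW i) _ (hfW j) (fun h => hij (hfinj h))
      · exact hbox _ (hfW i0) _ (hfW j0) (fun h => hij0 (hfinj h))
    · push_neg at hd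
      refine ⟨0, ?_⟩
      intro x hx y hy hxy
      obtain ⟨i, hi, rfl⟩ := Finset.mem_image.1 hx
      obtain ⟨j, hj, rfl⟩ := Finset.mem_image.1 hy
      exact absurd (congrArg f (hd i hi j hj)) hxy
  have := hmono t htW hmonot
  rwa [htdef, Finset.card_image_of_injective s hfinj] at this
end
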